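/- arXiv:1802.04658 — 6 statements merged into one kernel-verified Lean document; each statement's English description precedes it below -/
import Mathlib

section
/- Let ε > 0, p > 0, q > 0 and α, β ∈ ℝ. Define y : [0,1] → ℝ by y(x) = (ε/p) · ln( ((e^{αp/ε} − e^{βp/ε}) e^{−qx/ε} + e^{βp/ε} − e^{(αp−q)/ε}) / (1 − e^{−q/ε}) ). Then the argument of the logarithm is positive for all x ∈ [0,1], y satisfies ε y''(x) + p (y'(x))² + q y'(x) = 0 for all x ∈ (0,1), and y(0) = α, y(1) = β. -/
/-!
Cole–Hopf: for `p ≠ 0`, `y = (ε / p) log u` turns `ε y'' + p y'² + q y' = 0` into the linear equation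
`ε u'' + q u' = 0`, whose solutions are `a e^{-q x / ε} + b`. The argument of the logarithm is the
solution `u` with `u(0) = e^{α p / ε}`, `u(1) = e^{β p / ε}`; on `[0, 1]` it is a convex combination of
these two positive values, so `y` is defined there and takes the boundary values `α` and `β`.
-/

open Real Set Filter Topology

theorem hypersingular_ode_of_log {ε p q : ℝ} (hp : p ≠ 0) {y u u' u'' : ℝ → ℝ} {s : Set ℝ}
    (hs : IsOpen s) (hy : ∀ t ∈ s, y t = ε / p * log (u t))
    (hu : ∀ t ∈ s, HasDerivAt u (u' t) t) (hu' : ∀ t ∈ s, HasDerivAt u' (u'' t) t)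
    (hne : ∀ t ∈ s, u t ≠ 0) (hlin : ∀ t ∈ s, ε * u'' t + q * u' t = 0) {x : ℝ} (hx : x ∈ s) :
    ε * deriv (deriv y) x + p * deriv y x ^ 2 + q * deriv y x = 0 := by
  have hy' : ∀ t ∈ s, HasDerivAt y (ε / p * (u' t / u t)) t := fun t ht =>
    (((hu t ht).log (hne t ht)).const_mul (ε / p)).congr_of_eventuallyEq
      (eventually_of_mem (hs.mem_nhds ht) hy)
  have hy'' : HasDerivAt (deriv y) (ε / p * ((u'' x * u x - u' x * u' x) / u x ^ 2)) x :=
    (((hu' x hx).div (hu x hx) (hne x hx)).const_mul (ε / p)).congr_of_eventuallyEq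
      (eventually_of_mem (hs.mem_nhds hx) fun t ht => (hy' t ht).deriv)
  rw [hy''.deriv, (hy' x hx).deriv]
  have hux := hne x hx
  field_simp
  linear_combination ε * u x * hlin x hx

theorem hasDerivAt_mul_exp_mul (k c x : ℝ) :
    HasDerivAt (fun t => k * exp (c * t)) (c * k * exp (c * x)) x :=
  (((hasDerivAt_id' x).const_mul c).exp.const_mul k).congr_deriv (by ring)

/-- The solution of `u'' = c u'` with `u 0 = A` and `u 1 = B`. -/
noncomputable def expInterp (A B c x : ℝ) : ℝ :=
  (A - B) / (1 - exp c) * exp (c * x) + (B - A * exp c) / (1 - exp c)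

section expInterp

variable {A B c : ℝ}

theorem one_sub_exp_ne_zero (hc : c ≠ 0) : 1 - exp c ≠ 0 :=
  sub_ne_zero.2 (Ne.symm ((exp_eq_one_iff c).not.2 hc))

theorem hasDerivAt_expInterp (x : ℝ) :
    HasDerivAt (expInterp A B c) (c * ((A - B) / (1 - exp c)) * exp (c * x)) x :=
  (hasDerivAt_mul_exp_mul _ c x).add_const _

theorem expInterp_zero (hc : c ≠ 0) : expInterp A B c 0 = A := by
  have := one_sub_exp_ne_zero hc
  simp only [expInterp, mul_zero, exp_zero, mul_one]
  field_simp
  ring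

theorem expInterp_one (hc : c ≠ 0) : expInterp A B c 1 = B := by
  have := one_sub_exp_ne_zero hc
  simp only [expInterp, mul_one]
  field_simp
  ring

theorem expInterp_pos (hA : 0 < A) (hB : 0 < B) (hc : c < 0) {x : ℝ} (hx : x ∈ Icc (0 : ℝ) 1) :
    0 < expInterp A B c x := by
  have hr : exp c < 1 := exp_lt_one_iff.2 hc
  have hlo : exp c ≤ exp (c * x) := exp_le_exp.2 (by nlinarith [hx.2])
  have hhi : exp (c * x) ≤ 1 := exp_le_one_iff.2 (by nlinarith [hx.1])
  have : expInterp A B c x = (A * (exp (c * x) - exp c) + B * (1 - exp (c * x))) / (1 - exp c) := by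
    rw [expInterp]
    field_simp
    ring
  rw [this]
  apply div_pos _ (by linarith)
  rcases hhi.lt_or_eq with h | h <;> nlinarith

end expInterp

/-- the exact solution of the hypersingular boundary-value problem
ε y'' + p (y')² + q y' = 0, y(0) = α, y(1) = β. -/
theorem stmt_1 (ε p q α β : ℝ) (hε : 0 < ε) (hp : 0 < p) (hq : 0 < q)
    (y : ℝ → ℝ)
    (hy : ∀ x : ℝ, y x = ε / p * Real.log
      (((Real.exp (α * p / ε) - Real.exp (β * p / ε)) * Real.exp (-q * x / ε)
        + Real.exp (β * p / ε) - Real.exp ((α * p - q) / ε)) / (1 - Real.exp (-q / ε)))) :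
    (∀ x ∈ Set.Icc (0 : ℝ) 1,
      0 < ((Real.exp (α * p / ε) - Real.exp (β * p / ε)) * Real.exp (-q * x / ε)
        + Real.exp (β * p / ε) - Real.exp ((α * p - q) / ε)) / (1 - Real.exp (-q / ε))) ∧
    (∀ x ∈ Set.Ioo (0 : ℝ) 1,
      ε * deriv (deriv y) x + p * (deriv y x) ^ 2 + q * deriv y x = 0) ∧
    y 0 = α ∧ y 1 = β := by
  have harg : ∀ x : ℝ, ((exp (α * p / ε) - exp (β * p / ε)) * exp (-q * x / ε)
      + exp (β * p / ε) - exp ((α * p - q) / ε)) / (1 - exp (-q / ε))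
      = expInterp (exp (α * p / ε)) (exp (β * p / ε)) (-q / ε) x := by
    intro x
    rw [expInterp, show (α * p - q) / ε = α * p / ε + -q / ε by ring, exp_add,
      show -q * x / ε = -q / ε * x by ring]
    ring
  simp only [harg] at hy ⊢
  have hc : -q / ε < 0 := div_neg_of_neg_of_pos (neg_neg_of_pos hq) hε
  have hpos := fun x => expInterp_pos (exp_pos (α * p / ε)) (exp_pos (β * p / ε)) hc (x := x)
  refine ⟨hpos, fun x hx => ?_, ?_, ?_⟩
  · refine hypersingular_ode_of_log hp.ne' isOpen_Ioo (fun t _ => hy t)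
      (fun t _ => hasDerivAt_expInterp t) (fun t _ => hasDerivAt_mul_exp_mul _ _ t)
      (fun t ht => (hpos t (Ioo_subset_Icc_self ht)).ne') (fun t _ => ?_) hx
    field_simp
    ring
  · rw [hy, expInterp_zero hc.ne, log_exp]
    field_simp
  · rw [hy, expInterp_one hc.ne, log_exp]
    field_simp
end

section
/- Let ε > 0, p > 0, q > 0 and α, β ∈ ℝ, and let y : [0,1] → ℝ be defined by y(x) = (ε/p) · ln( ((e^{αp/ε} − e^{βp/ε}) e^{−qx/ε} + e^{βp/ε} − e^{(αp−q)/ε}) / (1 − e^{−q/ε}) ). Then the one-sided derivatives at the endpoints are y'(0) = (q/p) · (e^{(β−α)p/ε} − 1) / (1 − e^{−q/ε}) and y'(1) = (q/p) · (1 − e^{(α−β)p/ε}) / (e^{q/ε} − 1). -/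
/-!
With `a = e^{αp/ε}`, `b = e^{βp/ε}`, `E = e^{-q/ε}` the solution is
`y = (ε/p) log (N / (1 - E))` where `N x = (a - b) e^{-qx/ε} + b - aE`, so `y' = (ε/p) N' / N`:
the constant `1 - E` drops out, and `N 0 = a (1 - E)`, `N 1 = b (1 - E)` turn the two endpoint
values into closed forms.
-/

open Real Set

lemma one_sub_exp_ne_zero_s2 {k : ℝ} (hk : k ≠ 0) : 1 - exp k ≠ 0 :=
  sub_ne_zero.mpr fun h => hk ((exp_eq_one_iff k).mp h.symm)

noncomputable def logExpProfile (c s t k x : ℝ) : ℝ :=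
  c * log (((exp s - exp t) * exp (k * x) + exp t - exp (s + k)) / (1 - exp k))

section logExpProfile

variable {c s t k : ℝ}

lemma hasDerivAt_logExpProfile {x : ℝ} (hk : k ≠ 0)
    (hx : (exp s - exp t) * exp (k * x) + exp t - exp (s + k) ≠ 0) :
    HasDerivAt (logExpProfile c s t k)
      (c * k * (exp s - exp t) * exp (k * x) /
        ((exp s - exp t) * exp (k * x) + exp t - exp (s + k))) x := by
  have hD := one_sub_exp_ne_zero_s2 hk
  have hexp : HasDerivAt (fun x => exp (k * x)) (exp (k * x) * k) x := by
    simpa using ((hasDerivAt_id x).const_mul k).exp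
  have hlog := ((((hexp.const_mul (exp s - exp t)).add_const (exp t)).sub_const
    (exp (s + k))).div_const (1 - exp k)).log (div_ne_zero hx hD)
  exact (hlog.const_mul c).congr_deriv (by field_simp)

lemma derivWithin_logExpProfile_zero (hk : k ≠ 0) :
    derivWithin (logExpProfile c s t k) (Icc 0 1) 0 = c * k * (1 - exp (t - s)) / (1 - exp k) := by
  have hD := one_sub_exp_ne_zero_s2 hk
  have h0 : (exp s - exp t) * exp (k * 0) + exp t - exp (s + k) = exp s * (1 - exp k) := by
    rw [mul_zero, exp_zero, exp_add]
    ring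
  have hN : (exp s - exp t) * exp (k * 0) + exp t - exp (s + k) ≠ 0 := by
    rw [h0]
    exact mul_ne_zero (exp_pos s).ne' hD
  rw [(hasDerivAt_logExpProfile (c := c) hk hN).hasDerivWithinAt.derivWithin
      (uniqueDiffOn_Icc zero_lt_one 0 (left_mem_Icc.mpr zero_le_one)),
    h0, mul_zero, exp_zero, exp_sub]
  field_simp

lemma derivWithin_logExpProfile_one (hk : k ≠ 0) :
    derivWithin (logExpProfile c s t k) (Icc 0 1) 1 =
      c * k * (exp (s - t) - 1) / (exp (-k) - 1) := by
  have hD := one_sub_exp_ne_zero_s2 hk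
  have h1 : (exp s - exp t) * exp (k * 1) + exp t - exp (s + k) = exp t * (1 - exp k) := by
    rw [mul_one, exp_add]
    ring
  have hN : (exp s - exp t) * exp (k * 1) + exp t - exp (s + k) ≠ 0 := by
    rw [h1]
    exact mul_ne_zero (exp_pos t).ne' hD
  rw [(hasDerivAt_logExpProfile (c := c) hk hN).hasDerivWithinAt.derivWithin
      (uniqueDiffOn_Icc zero_lt_one 1 (right_mem_Icc.mpr zero_le_one)),
    h1, exp_sub, exp_neg, mul_one]
  field_simp

end logExpProfile

theorem stmt_2_general (ε p q α β : ℝ) (hε : 0 < ε) (hq : 0 < q)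
    (y : ℝ → ℝ)
    (hy : ∀ x : ℝ, y x = ε / p * Real.log
      (((Real.exp (α * p / ε) - Real.exp (β * p / ε)) * Real.exp (-q * x / ε)
        + Real.exp (β * p / ε) - Real.exp ((α * p - q) / ε)) / (1 - Real.exp (-q / ε)))) :
    derivWithin y (Set.Icc (0 : ℝ) 1) 0
      = q / p * (Real.exp ((β - α) * p / ε) - 1) / (1 - Real.exp (-q / ε)) ∧
    derivWithin y (Set.Icc (0 : ℝ) 1) 1
      = q / p * (1 - Real.exp ((α - β) * p / ε)) / (Real.exp (q / ε) - 1) := by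
  have hy' : y = logExpProfile (ε / p) (α * p / ε) (β * p / ε) (-q / ε) := by
    funext x
    rw [hy, logExpProfile]
    ring_nf
  have hk : -q / ε ≠ 0 := div_ne_zero (neg_ne_zero.mpr hq.ne') hε.ne'
  rw [hy', derivWithin_logExpProfile_zero hk, derivWithin_logExpProfile_one hk]
  have hcoef : ε / p * (-q / ε) = -(q / p) := by
    rw [div_mul_div_comm, mul_comm p, mul_div_mul_left _ _ hε.ne', neg_div]
  rw [hcoef, ← sub_div, ← sub_div, ← sub_mul, ← sub_mul, neg_div, neg_neg]
  constructor <;> ring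

/-- one-sided derivatives at the endpoints of the exact solution of the
hypersingular boundary-value problem ε y'' + p (y')² + q y' = 0, y(0) = α, y(1) = β. -/
theorem stmt_2 (ε p q α β : ℝ) (hε : 0 < ε) (hp : 0 < p) (hq : 0 < q)
    (y : ℝ → ℝ)
    (hy : ∀ x : ℝ, y x = ε / p * Real.log
      (((Real.exp (α * p / ε) - Real.exp (β * p / ε)) * Real.exp (-q * x / ε)
        + Real.exp (β * p / ε) - Real.exp ((α * p - q) / ε)) / (1 - Real.exp (-q / ε)))) :
    derivWithin y (Set.Icc (0 : ℝ) 1) 0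
      = q / p * (Real.exp ((β - α) * p / ε) - 1) / (1 - Real.exp (-q / ε)) ∧
    derivWithin y (Set.Icc (0 : ℝ) 1) 1
      = q / p * (1 - Real.exp ((α - β) * p / ε)) / (Real.exp (q / ε) - 1) :=
  stmt_2_general ε p q α β hε hq y hy
end

section
/- Let p > 0, q > 0 and α, β ∈ ℝ with β > α, and for ε > 0 set D(ε) = (q/p) · (e^{(β−α)p/ε} − 1) / (1 − e^{−q/ε}) (the derivative at the left boundary of the exact solution of the hypersingular problem). Then ε · ln(D(ε)) tends to (β − α)p as ε → 0⁺; in particular D(ε) grows like e^{(β−α)p/ε}, i.e. the boundary layer at x = 0 is hypersingular. -/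
/-! Factoring out the dominant exponential, `D(ε) = e^{c/ε} g(ε)` with `c = (β - α)p` and
`g(ε) = (q/p)(1 - e^{-c/ε})/(1 - e^{-q/ε}) → q/p ≠ 0`, so `ε log D(ε) = c + ε log g(ε) → c`. -/

open Filter Real Topology

lemma tendsto_exp_neg_div_nhdsGT_zero {a : ℝ} (ha : 0 < a) :
    Tendsto (fun ε => exp (-a / ε)) (𝓝[>] 0) (𝓝 0) := by
  have hdiv : Tendsto (fun ε => -a / ε) (𝓝[>] 0) atBot := by
    refine (tendsto_neg_atTop_atBot.comp (tendsto_inv_nhdsGT_zero.const_mul_atTop ha)).congr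
      fun ε => ?_
    simp [div_eq_mul_inv]
  exact tendsto_exp_atBot.comp hdiv

lemma tendsto_mul_log_exp_div_mul {g : ℝ → ℝ} {c L : ℝ} (hL : L ≠ 0)
    (hg : Tendsto g (𝓝[>] 0) (𝓝 L)) :
    Tendsto (fun ε => ε * log (exp (c / ε) * g ε)) (𝓝[>] 0) (𝓝 c) := by
  have hlog : Tendsto (fun ε => ε * log (g ε)) (𝓝[>] 0) (𝓝 0) := by
    simpa using (tendsto_id.mono_left nhdsWithin_le_nhds).mul (hg.log hL)
  have heq : (fun ε => c + ε * log (g ε)) =ᶠ[𝓝[>] 0] fun ε => ε * log (exp (c / ε) * g ε) := by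
    filter_upwards [self_mem_nhdsWithin, hg.eventually_ne hL] with ε (hε : 0 < ε) hgε
    rw [log_mul (exp_ne_zero _) hgε, log_exp]
    field_simp
  simpa using (tendsto_const_nhds.add hlog).congr' heq

/-- for β > α the left-boundary derivative
D(ε) = (q/p)(e^{(β−α)p/ε} − 1)/(1 − e^{−q/ε}) of the exact solution satisfies
ε · ln D(ε) → (β − α)p as ε → 0⁺, i.e. the boundary layer at x = 0 is hypersingular. -/
theorem stmt_4 (p q α β : ℝ) (hp : 0 < p) (hq : 0 < q) (hβα : α < β) :
    Tendsto (fun ε : ℝ => ε * Real.log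
        (q / p * (Real.exp ((β - α) * p / ε) - 1) / (1 - Real.exp (-q / ε))))
      (nhdsWithin 0 (Set.Ioi 0)) (nhds ((β - α) * p)) := by
  set c := (β - α) * p
  have hc : 0 < c := mul_pos (sub_pos.2 hβα) hp
  have hfactor : ∀ ε, q / p * (exp (c / ε) - 1) / (1 - exp (-q / ε)) =
      exp (c / ε) * (q / p * (1 - exp (-c / ε)) / (1 - exp (-q / ε))) := by
    intro ε
    rw [neg_div ε c, exp_neg]
    field_simp
  have hg : Tendsto (fun ε => q / p * (1 - exp (-c / ε)) / (1 - exp (-q / ε)))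
      (𝓝[>] 0) (𝓝 (q / p)) := by
    simpa [Pi.div_def] using
      (((tendsto_exp_neg_div_nhdsGT_zero hc).const_sub 1).const_mul (q / p)).div
        ((tendsto_exp_neg_div_nhdsGT_zero hq).const_sub 1) (by norm_num)
  simp_rw [hfactor]
  exact tendsto_mul_log_exp_div_mul (div_pos hq hp).ne' hg
end

section
/- Let p > 0, q > 0 and α, β ∈ ℝ with β < α, and for ε > 0 set D(ε) = (q/p) · (e^{(β−α)p/ε} − 1) / (1 − e^{−q/ε}) (the derivative at the left boundary of the exact solution of the hypersingular problem). Then D(ε) tends to −q/p as ε → 0⁺, i.e. the left-boundary derivative stays bounded and there is no boundary layer at x = 0. -/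
open Filter Topology

lemma tendsto_exp_div_nhdsGT_zero {c : ℝ} (hc : c < 0) :
    Tendsto (fun ε : ℝ => Real.exp (c / ε)) (𝓝[>] 0) (𝓝 0) := by
  have hdiv : Tendsto (fun ε : ℝ => c / ε) (𝓝[>] 0) atBot := by
    simpa only [div_eq_mul_inv] using tendsto_inv_nhdsGT_zero.const_mul_atTop_of_neg hc
  exact Real.tendsto_exp_atBot.comp hdiv

/-- for β < α the left-boundary derivative
D(ε) = (q/p)(e^{(β−α)p/ε} − 1)/(1 − e^{−q/ε}) of the exact solution tends to −q/p
as ε → 0⁺, so there is no boundary layer at x = 0. -/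
theorem stmt_5 (p q α β : ℝ) (hp : 0 < p) (hq : 0 < q) (hβα : β < α) :
    Tendsto (fun ε : ℝ =>
        q / p * (Real.exp ((β - α) * p / ε) - 1) / (1 - Real.exp (-q / ε)))
      (nhdsWithin 0 (Set.Ioi 0)) (nhds (-(q / p))) := by
  have hexp_num := tendsto_exp_div_nhdsGT_zero (mul_neg_of_neg_of_pos (sub_neg.mpr hβα) hp)
  have hexp_den := tendsto_exp_div_nhdsGT_zero (neg_neg_iff_pos.mpr hq)
  have hlim := ((hexp_num.sub_const 1).const_mul (q / p)).div (hexp_den.const_sub 1) (by norm_num)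
  rwa [show q / p * (0 - 1) / (1 - 0) = -(q / p) by ring] at hlim
end

section
/- Let ε > 0, q > 0, let p : ℝ → ℝ be continuous, let α, β ∈ ℝ, and define P(y) = ∫₀^y exp( (1/ε) ∫₀^z p(ξ) dξ ) dz. Suppose y : [0,1] → ℝ is differentiable, y(0) = α, and P(y(x)) = (P(β) − P(α) e^{−q/ε})/(1 − e^{−q/ε}) + ((P(α) − P(β))/(1 − e^{−q/ε})) e^{−qx/ε} for all x ∈ [0,1]. Then the derivative of y at the left boundary equals y'(0) = (q/ε) · (P(β) − P(α)) / (1 − e^{−q/ε}) · exp( −(1/ε) ∫₀^α p(ξ) dξ ). -/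
/-!
Differentiating the implicit relation `P (y x) = A + C e^{-q x / ε}` at `x = 0` gives
`P'(α) y'(0) = -(q / ε) C`, and by the fundamental theorem of calculus
`P'(α) = exp((1/ε) ∫₀^α p)`, which is nonzero.
-/

open Real intervalIntegral

theorem continuous_exp_mul_primitive {p : ℝ → ℝ} (hp : Continuous p) (c : ℝ) :
    Continuous fun z : ℝ => exp (c * ∫ ξ in (0 : ℝ)..z, p ξ) :=
  continuous_exp.comp <| continuous_const.mul <|
    continuous_primitive (fun a b => hp.intervalIntegrable a b) 0

theorem hasDerivAt_const_add_mul_exp_mul_div (a c b e x : ℝ) :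
    HasDerivAt (fun x => a + c * exp (b * x / e)) (c * (exp (b * x / e) * (b / e))) x := by
  have hlin : HasDerivAt (fun x => b * x / e) (b / e) x := by
    simpa using ((hasDerivAt_id x).const_mul b).div_const e
  exact (hlin.exp.const_mul c).const_add a

theorem derivWithin_eq_div_of_eqOn_comp {P y f : ℝ → ℝ} {s : Set ℝ} {x₀ P' f' : ℝ}
    (hP : HasDerivAt P P' (y x₀)) (hP' : P' ≠ 0) (hy : DifferentiableWithinAt ℝ y s x₀)
    (hs : UniqueDiffWithinAt ℝ s x₀) (hf : HasDerivWithinAt f f' s x₀)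
    (hx₀ : x₀ ∈ s) (heq : Set.EqOn (P ∘ y) f s) :
    derivWithin y s x₀ = f' / P' := by
  have hcomp : HasDerivWithinAt (P ∘ y) (P' * derivWithin y s x₀) s x₀ :=
    hP.comp_hasDerivWithinAt x₀ hy.hasDerivWithinAt
  have hf' : HasDerivWithinAt (P ∘ y) f' s x₀ := hf.congr heq (heq hx₀)
  rw [← hs.eq_deriv _ hcomp hf', mul_div_cancel_left₀ _ hP']

theorem stmt_10_general (ε q α β : ℝ)
    (p : ℝ → ℝ) (hp : Continuous p)
    (P : ℝ → ℝ)
    (hP : ∀ w : ℝ, P w = ∫ z in (0 : ℝ)..w, Real.exp ((1 / ε) * ∫ ξ in (0 : ℝ)..z, p ξ))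
    (y : ℝ → ℝ)
    (hy : DifferentiableOn ℝ y (Set.Icc (0 : ℝ) 1))
    (hy0 : y 0 = α)
    (hsol : ∀ x ∈ Set.Icc (0 : ℝ) 1,
      P (y x) = (P β - P α * Real.exp (-q / ε)) / (1 - Real.exp (-q / ε))
        + (P α - P β) / (1 - Real.exp (-q / ε)) * Real.exp (-q * x / ε)) :
    derivWithin y (Set.Icc (0 : ℝ) 1) 0
      = q / ε * (P β - P α) / (1 - Real.exp (-q / ε))
        * Real.exp (-(1 / ε) * ∫ ξ in (0 : ℝ)..α, p ξ) := by
  have h0 : (0 : ℝ) ∈ Set.Icc (0 : ℝ) 1 := ⟨le_rfl, zero_le_one⟩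
  have hPα : HasDerivAt P (exp ((1 / ε) * ∫ ξ in (0 : ℝ)..α, p ξ)) (y 0) := by
    rw [hy0, show P = _ from funext hP]
    exact ((continuous_exp_mul_primitive hp _).integral_hasStrictDerivAt 0 α).hasDerivAt
  rw [derivWithin_eq_div_of_eqOn_comp hPα (exp_pos _).ne' (hy 0 h0)
      (uniqueDiffOn_Icc one_pos 0 h0) (hasDerivAt_const_add_mul_exp_mul_div _ _ _ _ _).hasDerivWithinAt
      h0 hsol]
  simp only [mul_zero, zero_div, exp_zero, one_mul, neg_mul, exp_neg]
  ring

/-- if y is differentiable on [0,1], y(0) = α, and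
P(y(x)) = (P(β) − P(α)e^{−q/ε})/(1 − e^{−q/ε}) + ((P(α) − P(β))/(1 − e^{−q/ε})) e^{−qx/ε}
on [0,1], where P(y) = ∫₀^y exp((1/ε)∫₀^z p(ξ)dξ) dz, then the derivative at the left
boundary is y'(0) = (q/ε)(P(β) − P(α))/(1 − e^{−q/ε}) · exp(−(1/ε)∫₀^α p(ξ)dξ). -/
theorem stmt_10 (ε q α β : ℝ) (hε : 0 < ε) (hq : 0 < q)
    (p : ℝ → ℝ) (hp : Continuous p)
    (P : ℝ → ℝ)
    (hP : ∀ w : ℝ, P w = ∫ z in (0 : ℝ)..w, Real.exp ((1 / ε) * ∫ ξ in (0 : ℝ)..z, p ξ))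
    (y : ℝ → ℝ)
    (hy : DifferentiableOn ℝ y (Set.Icc (0 : ℝ) 1))
    (hy0 : y 0 = α)
    (hsol : ∀ x ∈ Set.Icc (0 : ℝ) 1,
      P (y x) = (P β - P α * Real.exp (-q / ε)) / (1 - Real.exp (-q / ε))
        + (P α - P β) / (1 - Real.exp (-q / ε)) * Real.exp (-q * x / ε)) :
    derivWithin y (Set.Icc (0 : ℝ) 1) 0
      = q / ε * (P β - P α) / (1 - Real.exp (-q / ε))
        * Real.exp (-(1 / ε) * ∫ ξ in (0 : ℝ)..α, p ξ) :=
  stmt_10_general ε q α β p hp P hP y hy hy0 hsol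
end

section
/- Let ε > 0 and α, β ∈ ℝ. Define W : [0,∞) → ℝ by W(z) = ε ln( (e^{β/ε} − e^{α/ε}) · (2/√π) ∫₀^{z/(2√ε)} e^{−ζ²} dζ + e^{α/ε} ). Then the argument of the logarithm is positive for all z ≥ 0, W satisfies ε W''(z) + (W'(z))² + (z/2) W'(z) = 0 for all z > 0, W(0) = α, and W(z) → β as z → ∞. -/
/-!
The Cole–Hopf substitution `W = ε log F` linearises the equation: `W` solves it wherever `F > 0`
and `ε F'' + (z/2) F' = 0`. The self-similar heat profile `F z = A erf (z/(2√ε)) + B` satisfies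
this linear equation, and with `A = e^{β/ε} - e^{α/ε}`, `B = e^{α/ε}` it is a convex combination
of `e^{α/ε}` and `e^{β/ε}` for `z ≥ 0` (as `erf ∈ [0, 1]` there), equals `e^{α/ε}` at `0` and
tends to `e^{β/ε}` at infinity since `∫₀^∞ e^{-ζ²} dζ = √π / 2`.
-/

open MeasureTheory Real Filter Topology Set

noncomputable def erf (x : ℝ) : ℝ := 2 / √π * ∫ ζ in (0 : ℝ)..x, exp (-ζ ^ 2)

lemma integrableOn_exp_neg_sq_Ioi : IntegrableOn (fun ζ : ℝ => exp (-ζ ^ 2)) (Ioi 0) := by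
  simpa using (integrable_exp_neg_mul_sq one_pos).integrableOn (s := Ioi (0 : ℝ))

lemma integral_exp_neg_sq_Ioi : ∫ ζ in Ioi (0 : ℝ), exp (-ζ ^ 2) = √π / 2 := by
  simpa using integral_gaussian_Ioi 1

lemma erf_zero : erf 0 = 0 := by
  simp [erf]

lemma hasDerivAt_erf (x : ℝ) : HasDerivAt erf (2 / √π * exp (-x ^ 2)) x :=
  ((continuous_exp.comp (continuous_pow 2).neg).integral_hasStrictDerivAt 0 x).hasDerivAt.const_mul
    _

lemma erf_mem_Icc {x : ℝ} (hx : 0 ≤ x) : erf x ∈ Icc 0 1 := by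
  have hπ : 0 < √π := sqrt_pos.mpr pi_pos
  have hle : ∫ ζ in (0 : ℝ)..x, exp (-ζ ^ 2) ≤ √π / 2 := by
    rw [← integral_exp_neg_sq_Ioi, intervalIntegral.integral_of_le hx]
    exact setIntegral_mono_set integrableOn_exp_neg_sq_Ioi
      (.of_forall fun _ => (exp_pos _).le) (.of_forall Ioc_subset_Ioi_self)
  have hnonneg : 0 ≤ ∫ ζ in (0 : ℝ)..x, exp (-ζ ^ 2) :=
    intervalIntegral.integral_nonneg hx fun _ _ => (exp_pos _).le
  constructor
  · unfold erf; positivity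
  · unfold erf
    rw [div_mul_eq_mul_div, div_le_one hπ]
    linarith

lemma tendsto_erf_atTop : Tendsto erf atTop (𝓝 1) := by
  have h := (intervalIntegral_tendsto_integral_Ioi 0 integrableOn_exp_neg_sq_Ioi
    tendsto_id).const_mul (2 / √π)
  rwa [integral_exp_neg_sq_Ioi, div_mul_div_cancel₀ (sqrt_pos.mpr pi_pos).ne',
    div_self two_ne_zero] at h

lemma hasDerivAt_erf_div (c z : ℝ) :
    HasDerivAt (fun z => erf (z / c)) (2 / √π * exp (-(z / c) ^ 2) / c) z := by
  have := (hasDerivAt_erf (z / c)).comp z ((hasDerivAt_id' z).div_const c)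
  rwa [mul_one_div] at this

lemma hasDerivAt_exp_neg_sq_div (c z : ℝ) :
    HasDerivAt (fun z => exp (-(z / c) ^ 2)) (-(2 * z / c ^ 2) * exp (-(z / c) ^ 2)) z := by
  convert (((hasDerivAt_id' z).div_const c).fun_pow 2).fun_neg.exp using 1
  ring

theorem coleHopf {ε z F'' : ℝ} {F F' : ℝ → ℝ} (hpos : ∀ᶠ x in 𝓝 z, 0 < F x)
    (hF : ∀ᶠ x in 𝓝 z, HasDerivAt F (F' x) x) (hF' : HasDerivAt F' F'' z)
    (heat : ε * F'' + z / 2 * F' z = 0) :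
    ε * deriv (deriv fun x => ε * log (F x)) z + deriv (fun x => ε * log (F x)) z ^ 2
      + z / 2 * deriv (fun x => ε * log (F x)) z = 0 := by
  have hW : deriv (fun x => ε * log (F x)) =ᶠ[𝓝 z] fun x => ε * (F' x / F x) := by
    filter_upwards [hpos, hF] with x hx hFx
    exact ((hFx.log hx.ne').const_mul ε).deriv
  have hFz : F z ≠ 0 := hpos.self_of_nhds.ne'
  have hW' := (hF'.fun_div hF.self_of_nhds hFz).const_mul ε
  rw [hW.deriv_eq, hW'.deriv, hW.self_of_nhds]
  field_simp
  linear_combination (2 * ε * F z) * heat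

lemma sub_mul_add_pos {a b t : ℝ} (ha : 0 < a) (hb : 0 < b) (ht : t ∈ Icc 0 1) :
    0 < (b - a) * t + a := by
  have := convex_Ioi (0 : ℝ) ha hb (sub_nonneg.2 ht.2) ht.1 (sub_add_cancel 1 t)
  simp only [smul_eq_mul, mem_Ioi] at this
  linarith

/-- W(z) = ε ln((e^{β/ε} − e^{α/ε}) erf(z/(2√ε)) + e^{α/ε}), with
erf(ξ) = (2/√π)∫₀^ξ e^{−ζ²} dζ, is the exact solution of the self-similar problem
ε W'' + (W')² + (z/2) W' = 0, W(0) = α, W(∞) = β: the argument of the logarithm is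
positive for z ≥ 0, the ODE holds for z > 0, W(0) = α and W(z) → β as z → ∞. -/
theorem stmt_14 (ε α β : ℝ) (hε : 0 < ε)
    (W : ℝ → ℝ)
    (hW : ∀ z : ℝ, W z = ε * Real.log
      ((Real.exp (β / ε) - Real.exp (α / ε))
          * (2 / Real.sqrt Real.pi * ∫ ζ in (0 : ℝ)..(z / (2 * Real.sqrt ε)), Real.exp (-ζ ^ 2))
        + Real.exp (α / ε))) :
    (∀ z ≥ (0 : ℝ),
      0 < (Real.exp (β / ε) - Real.exp (α / ε))
          * (2 / Real.sqrt Real.pi * ∫ ζ in (0 : ℝ)..(z / (2 * Real.sqrt ε)), Real.exp (-ζ ^ 2))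
        + Real.exp (α / ε)) ∧
    (∀ z > (0 : ℝ),
      ε * deriv (deriv W) z + (deriv W z) ^ 2 + z / 2 * deriv W z = 0) ∧
    W 0 = α ∧
    Filter.Tendsto W Filter.atTop (nhds β) := by
  set A := exp (β / ε) - exp (α / ε)
  set c := 2 * √ε
  have hc : 0 < c := by positivity
  set F : ℝ → ℝ := fun z => A * erf (z / c) + exp (α / ε)
  have hWF : W = fun z => ε * log (F z) := funext hW
  have hFpos : ∀ z ≥ (0 : ℝ), 0 < F z := fun z hz =>
    sub_mul_add_pos (exp_pos _) (exp_pos _) (erf_mem_Icc (by positivity))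
  refine ⟨hFpos, fun z hz => ?_, ?_, ?_⟩
  · rw [hWF]
    refine coleHopf (F' := fun z => A * (2 / √π * exp (-(z / c) ^ 2) / c)) ?_
      (.of_forall fun x => ((hasDerivAt_erf_div c x).const_mul A).add_const _)
      ((((hasDerivAt_exp_neg_sq_div c z).const_mul _).div_const c).const_mul A) ?_
    · filter_upwards [Ioi_mem_nhds hz] with x hx using hFpos x hx.le
    · have hc2 : c ^ 2 = 4 * ε := by rw [mul_pow, sq_sqrt hε.le]; norm_num
      rw [hc2]
      field_simp
      ring
  · rw [hWF]
    simp only [F, zero_div, erf_zero, mul_zero, zero_add, log_exp]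
    field_simp
  · rw [hWF]
    have hF : Tendsto F atTop (𝓝 (exp (β / ε))) := by
      have := ((tendsto_erf_atTop.comp (tendsto_id.atTop_div_const hc)).const_mul A).add_const
        (exp (α / ε))
      simpa [A] using this
    have := ((continuousAt_log (exp_pos _).ne').tendsto.comp hF).const_mul ε
    rwa [log_exp, mul_div_cancel₀ _ hε.ne'] at this
end
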